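/- arXiv:0908.1757 — 2 statements merged into one kernel-verified Lean document; each statement's English description precedes it below -/
import Mathlib

section
/- Let E be a unital, not necessarily commutative, ring and let Q, P ∈ E. Set p := [[1, 0],[0, 0]] ∈ M₂(E) and e := H · p · G. Then e is an idempotent: e·e = e. Moreover, if I is a two-sided ideal of E such that 1−Q·P ∈ I and 1−P·Q ∈ I, then every entry of the matrix e − p lies in I. -/
/-! Since `G * H = 1`, the matrix `e = H p G` is a conjugate of the idempotent `p`,
hence idempotent. Only the first column of `H` and the first row of `G` survive in `H p G`;
modulo `1 - QP` these are `(P, 0)` and `(Q, 0)`, so `e ≡ [[PQ, 0], [0, 0]] ≡ p` modulo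
`(1 - QP, 1 - PQ)`. -/

theorem IsIdempotentElem.mul_mul_of_mul_eq_one {M : Type*} [Monoid M] {g h p : M}
    (hgh : g * h = 1) (hp : IsIdempotentElem p) : IsIdempotentElem (h * p * g) := by
  calc h * p * g * (h * p * g) = h * p * (g * h) * p * g := by simp only [mul_assoc]
    _ = h * p * g := by rw [hgh, mul_one, hp.mul_mul_self]

section IndexMatrices

variable {E : Type*} [Ring E]

def indexG (Q P : E) : Matrix (Fin 2) (Fin 2) E :=
  !![Q, 1 - Q * P; P * Q - 1, P + P * (1 - Q * P)]

def indexH (Q P : E) : Matrix (Fin 2) (Fin 2) E :=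
  !![P + P * (1 - Q * P), P * Q - 1; 1 - Q * P, Q]

theorem indexG_mul_indexH (Q P : E) : indexG Q P * indexH Q P = 1 := by
  ext i j
  fin_cases i <;> fin_cases j <;>
    simp [indexG, indexH, Matrix.mul_apply, Fin.sum_univ_succ] <;> noncomm_ring

theorem isIdempotentElem_e₁₁ :
    IsIdempotentElem (!![1, 0; 0, 0] : Matrix (Fin 2) (Fin 2) E) := by
  ext i j
  fin_cases i <;> fin_cases j <;> simp [Matrix.mul_apply, Fin.sum_univ_succ]

theorem indexH_mul_e₁₁_mul_indexG_sub_e₁₁ (Q P : E) :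
    indexH Q P * !![1, 0; 0, 0] * indexG Q P - !![1, 0; 0, 0] =
      !![(P + P * (1 - Q * P)) * Q - 1, (P + P * (1 - Q * P)) * (1 - Q * P);
        (1 - Q * P) * Q, (1 - Q * P) * (1 - Q * P)] := by
  ext i j
  fin_cases i <;> fin_cases j <;> simp [indexG, indexH]

theorem indexH_mul_e₁₁_mul_indexG_sub_e₁₁_mem {Q P : E} {I : TwoSidedIdeal E}
    (hQP : 1 - Q * P ∈ I) (hPQ : 1 - P * Q ∈ I) (i j : Fin 2) :
    (indexH Q P * !![1, 0; 0, 0] * indexG Q P - !![1, 0; 0, 0] : Matrix (Fin 2) (Fin 2) E) i j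
      ∈ I := by
  rw [indexH_mul_e₁₁_mul_indexG_sub_e₁₁]
  fin_cases i <;> fin_cases j <;> simp only [Fin.zero_eta, Fin.mk_one, Fin.isValue,
    Matrix.of_apply, Matrix.cons_val', Matrix.cons_val_zero, Matrix.cons_val_one,
    Matrix.empty_val', Matrix.cons_val_fin_one]
  · have h : (P + P * (1 - Q * P)) * Q - 1 = -(1 - P * Q) + P * ((1 - Q * P) * Q) := by
      noncomm_ring
    rw [h]
    exact I.add_mem (I.neg_mem hPQ) (I.mul_mem_left _ _ (I.mul_mem_right _ _ hQP))
  · exact I.mul_mem_left _ _ hQP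
  · exact I.mul_mem_right _ _ hQP
  · exact I.mul_mem_left _ _ hQP

end IndexMatrices

/-- With `G`, `H` as in the construction of the index morphism and
`p = [[1,0],[0,0]]`, the element `e = H · p · G` is an idempotent of `M₂(E)`;
moreover if `I` is a two-sided ideal containing `1 − QP` and `1 − PQ`, then every
entry of `e − p` lies in `I`. -/
theorem stmt3 (E : Type*) [Ring E] (Q P : E)
    (G H p e : Matrix (Fin 2) (Fin 2) E)
    (hG : G = !![Q, 1 - Q * P; P * Q - 1, P + P * (1 - Q * P)])
    (hH : H = !![P + P * (1 - Q * P), P * Q - 1; 1 - Q * P, Q])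
    (hp : p = !![(1 : E), 0; 0, 0])
    (he : e = H * p * G) :
    e * e = e ∧
    ∀ (I : TwoSidedIdeal E), 1 - Q * P ∈ I → 1 - P * Q ∈ I →
      ∀ i j, (e - p) i j ∈ I := by
  change G = indexG Q P at hG
  change H = indexH Q P at hH
  subst hG hH hp he
  exact ⟨(isIdempotentElem_e₁₁.mul_mul_of_mul_eq_one (indexG_mul_indexH Q P)).eq,
    fun _ hQP hPQ => indexH_mul_e₁₁_mul_indexG_sub_e₁₁_mem hQP hPQ⟩
end

section
/- Let R be a unital, not necessarily commutative, ring, let a, b ∈ R, and let n be a natural number. In M₂(R) set F := [[0, 1],[1, 0]] and f := [[a, 0],[0, b]]. Then (F·f − f·F)^{2n} = (−1)ⁿ · [[(a−b)^{2n}, 0],[0, (a−b)^{2n}]], and F·(F·f − f·F)^{2n+1} = (−1)ⁿ · [[(a−b)^{2n+1}, 0],[0, −(a−b)^{2n+1}]]. -/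
/-!
With `d = a - b`, the commutator is `[F, f] = !![0, -d; d, 0]`, whose square is the scalar
matrix `-d²`. Hence `[F, f]^(2n)` is the scalar `(-1)ⁿ d^(2n)`, and multiplying
`F * [F, f] = diag(d, -d)` by it gives the odd case; `d` commutes with `(-1)ⁿ d^(2n)`,
so no commutativity of `R` is needed.
-/

namespace Matrix

variable {R : Type*}

theorem fin_two_diagonal_pow [Semiring R] (a b : R) (n : ℕ) :
    !![a, 0; 0, b] ^ n = !![a ^ n, 0; 0, b ^ n] := by
  rw [← diagonal_vec2, diagonal_pow, ← diagonal_vec2]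
  congr 1
  ext i
  fin_cases i <;> rfl

variable [Ring R]

theorem fin_two_antidiagonal_sq (x y : R) :
    !![0, x; y, 0] ^ 2 = !![x * y, 0; 0, y * x] := by
  simp [sq]

theorem fin_two_swap_mul_antidiagonal (x y : R) :
    !![(0 : R), 1; 1, 0] * !![0, x; y, 0] = !![y, 0; 0, x] := by
  simp

theorem fin_two_swap_commutator_diagonal (a b : R) :
    !![(0 : R), 1; 1, 0] * !![a, 0; 0, b] - !![a, 0; 0, b] * !![(0 : R), 1; 1, 0]
      = !![0, -(a - b); a - b, 0] := by
  rw [mul_fin_two, mul_fin_two]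
  ext i j
  fin_cases i <;> fin_cases j <;> simp

end Matrix

open Matrix

/-- In `M₂(R)` with `F = [[0,1],[1,0]]` and `f = diag(a, b)`,
the powers of the commutator `[F, f]` satisfy
`([F,f])^{2n} = (−1)ⁿ diag((a−b)^{2n}, (a−b)^{2n})` and
`F·([F,f])^{2n+1} = (−1)ⁿ diag((a−b)^{2n+1}, −(a−b)^{2n+1})`. -/
theorem stmt15 (R : Type*) [Ring R] (a b : R) (n : ℕ)
    (F f : Matrix (Fin 2) (Fin 2) R)
    (hF : F = !![(0 : R), 1; 1, 0]) (hf : f = !![a, 0; 0, b]) :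
    (F * f - f * F) ^ (2 * n)
      = !![(-1 : R) ^ n * (a - b) ^ (2 * n), 0;
           0, (-1 : R) ^ n * (a - b) ^ (2 * n)] ∧
    F * (F * f - f * F) ^ (2 * n + 1)
      = !![(-1 : R) ^ n * (a - b) ^ (2 * n + 1), 0;
           0, -((-1 : R) ^ n * (a - b) ^ (2 * n + 1))] := by
  subst hF hf
  rw [fin_two_swap_commutator_diagonal]
  set d := a - b
  have h_even : !![0, -d; d, 0] ^ (2 * n)
      = !![(-1 : R) ^ n * d ^ (2 * n), 0; 0, (-1 : R) ^ n * d ^ (2 * n)] := by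
    rw [pow_mul, fin_two_antidiagonal_sq, neg_mul, mul_neg, ← sq, fin_two_diagonal_pow,
      neg_pow, ← pow_mul]
  have h_odd : d * ((-1 : R) ^ n * d ^ (2 * n)) = (-1 : R) ^ n * d ^ (2 * n + 1) := by
    have h_comm : Commute d ((-1 : R) ^ n * d ^ (2 * n)) :=
      ((Commute.neg_one_right d).pow_right n).mul_right (Commute.self_pow d _)
    rw [h_comm.eq, mul_assoc, ← pow_succ]
  refine ⟨h_even, ?_⟩
  rw [pow_succ', ← mul_assoc, fin_two_swap_mul_antidiagonal, h_even]
  simp [h_odd]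
end
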